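/- arXiv:1601.01298 — 3 statements merged into one kernel-verified Lean document; each statement's English description precedes it below -/
import Mathlib

section
/- If a finite graph G is dismantlable (i.e., its vertices can be ordered v_1,...,v_n so that for each i < n there exists j > i with v_j dominating v_i in the subgraph induced by {v_i,...,v_n}), then the cop wins the cops-and-robbers game on G. -/
/-- The closed neighbourhood `N[v]` of a vertex. -/
def closedNbhd {V : Type*} (G : SimpleGraph V) (v : V) : Set V :=
  insert v {u | G.Adj v u}

/-- `v` dominates `u`: `N[v] ⊇ N[u]`. -/
def Dominates {V : Type*} (G : SimpleGraph V) (v u : V) : Prop :=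
  closedNbhd G u ⊆ closedNbhd G v

/-- `v` dominates `u` in the subgraph induced on `S`. -/
def DominatesOn {V : Type*} (G : SimpleGraph V) (S : Set V) (v u : V) : Prop :=
  ∀ w ∈ S, w ∈ closedNbhd G u → w ∈ closedNbhd G v

/-- A (finite) graph is dismantlable: its vertices can be ordered `v_1, …, v_n` so that
for each `i < n` some later `v_j` dominates `v_i` in the subgraph induced on
`{v_i, …, v_n}`. -/
def Dismantlable {V : Type*} (G : SimpleGraph V) : Prop :=
  ∃ (n : ℕ) (e : Fin n ≃ V), ∀ i : Fin n, (i : ℕ) + 1 < n →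
    ∃ j : Fin n, i < j ∧
      DominatesOn G {w | ∃ k : Fin n, i ≤ k ∧ e k = w} (e j) (e i)

/-- A full-information cop strategy: an initial vertex, and a move function taking the
current cop and robber positions to a new cop position, which must be the current one or
an adjacent one. -/
structure CopStrategy {V : Type*} (G : SimpleGraph V) where
  init : V
  move : V → V → V
  valid : ∀ c r, move c r = c ∨ G.Adj c (move c r)

/-- A full-information robber strategy: an initial vertex chosen knowing the cop's start,
and a move function taking the cop's (just updated) position and the robber's position to
a new robber position, which must be the current one or an adjacent one. -/
structure RobberStrategy {V : Type*} (G : SimpleGraph V) where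
  init : V → V
  move : V → V → V
  valid : ∀ c r, move c r = r ∨ G.Adj r (move c r)

/-- The pair of (cop, robber) positions after `k` full rounds of play: the cop moves
first in each round, then the robber responds. -/
def play {V : Type*} (G : SimpleGraph V) (cs : CopStrategy G) (rs : RobberStrategy G) :
    ℕ → V × V
  | 0 => (cs.init, rs.init cs.init)
  | k + 1 =>
      let p := play G cs rs k
      let c' := cs.move p.1 p.2
      (c', rs.move c' p.2)

/-- The cop wins: there is a cop strategy such that against every robber strategy, at some
round the cop's move lands on the robber's current vertex. -/
def CopWin {V : Type*} (G : SimpleGraph V) : Prop :=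
  ∃ cs : CopStrategy G, ∀ rs : RobberStrategy G,
    ∃ k : ℕ, (play G cs rs (k + 1)).1 = (play G cs rs k).2

/- ------------------- auxiliary material ------------------- -/

lemma mem_closedNbhd_self {V : Type*} (G : SimpleGraph V) (v : V) :
    v ∈ closedNbhd G v := Set.mem_insert _ _

lemma closedNbhd_comm {V : Type*} (G : SimpleGraph V) {u v : V}
    (h : u ∈ closedNbhd G v) : v ∈ closedNbhd G u := by
  rcases Set.mem_insert_iff.mp h with h | h
  · subst h; exact Set.mem_insert _ _
  · exact Set.mem_insert_iff.mpr (Or.inr h.symm)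

open scoped Classical in
/-- One step of the dismantling retraction: send `e i` to its dominator, fix all else. -/
noncomputable def Fstep {V : Type*} (n : ℕ) (e : Fin n ≃ V)
    (jf : ∀ i : Fin n, (i : ℕ) + 1 < n → Fin n) (i : ℕ) (x : V) : V :=
  if h : i + 1 < n then
    (if x = e ⟨i, Nat.lt_of_succ_lt h⟩ then e (jf ⟨i, Nat.lt_of_succ_lt h⟩ h) else x)
  else x

/-- Projection of the whole vertex set onto the `i`-th suffix of the dismantling order. -/
noncomputable def proj {V : Type*} (n : ℕ) (e : Fin n ≃ V)
    (jf : ∀ i : Fin n, (i : ℕ) + 1 < n → Fin n) : ℕ → V → V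
  | 0 => fun x => x
  | i + 1 => fun x => Fstep n e jf i (proj n e jf i x)

lemma proj_mem {V : Type*} (n : ℕ) (e : Fin n ≃ V)
    (jf : ∀ i : Fin n, (i : ℕ) + 1 < n → Fin n)
    (hlt : ∀ i h, i < jf i h) :
    ∀ i, i < n → ∀ x, ∃ k : Fin n, i ≤ (k : ℕ) ∧ e k = proj n e jf i x := by
  intro i
  induction i with
  | zero => intro _ x; exact ⟨e.symm x, Nat.zero_le _, e.apply_symm_apply x⟩
  | succ i ih =>
    intro h x
    obtain ⟨k, hk, hke⟩ := ih (by omega) x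
    show ∃ k : Fin n, i + 1 ≤ (k : ℕ) ∧ e k = Fstep n e jf i (proj n e jf i x)
    unfold Fstep
    simp only [dif_pos h]
    by_cases hxe : proj n e jf i x = e ⟨i, Nat.lt_of_succ_lt h⟩
    · rw [if_pos hxe]
      refine ⟨jf ⟨i, Nat.lt_of_succ_lt h⟩ h, ?_, rfl⟩
      have h2 : i < ((jf ⟨i, Nat.lt_of_succ_lt h⟩ h : Fin n) : ℕ) :=
        Fin.lt_def.mp (hlt ⟨i, Nat.lt_of_succ_lt h⟩ h)
      omega
    · rw [if_neg hxe]
      refine ⟨k, ?_, hke⟩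
      rcases Nat.lt_or_ge i (k : ℕ) with h' | h'
      · omega
      · exfalso
        have hki : (k : ℕ) = i := le_antisymm h' hk
        apply hxe
        rw [← hke]
        congr 1
        exact Fin.ext (by simpa using hki)

lemma proj_hom {V : Type*} (G : SimpleGraph V) (n : ℕ) (e : Fin n ≃ V)
    (jf : ∀ i : Fin n, (i : ℕ) + 1 < n → Fin n)
    (hlt : ∀ i h, i < jf i h)
    (hdom : ∀ (i : Fin n) (h : (i : ℕ) + 1 < n),
      DominatesOn G {w | ∃ k : Fin n, i ≤ k ∧ e k = w} (e (jf i h)) (e i)) :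
    ∀ i, i < n → ∀ x y, x ∈ closedNbhd G y →
      proj n e jf i x ∈ closedNbhd G (proj n e jf i y) := by
  intro i
  induction i with
  | zero => intro _ x y hxy; exact hxy
  | succ i ih =>
    intro h x y hxy
    have ha := ih (by omega) x y hxy
    have hax := proj_mem n e jf hlt i (by omega) x
    have hay := proj_mem n e jf hlt i (by omega) y
    set a := proj n e jf i x with hadef
    set b := proj n e jf i y with hbdef
    show Fstep n e jf i a ∈ closedNbhd G (Fstep n e jf i b)
    unfold Fstep
    simp only [dif_pos h]
    by_cases hb : b = e ⟨i, Nat.lt_of_succ_lt h⟩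
    · rw [if_pos hb]
      have hmem : a ∈ closedNbhd G (e (jf ⟨i, Nat.lt_of_succ_lt h⟩ h)) := by
        apply hdom ⟨i, Nat.lt_of_succ_lt h⟩ h
        · obtain ⟨k, hk, hke⟩ := hax
          exact ⟨k, hk, hke⟩
        · rw [← hb]; exact ha
      by_cases hae : a = e ⟨i, Nat.lt_of_succ_lt h⟩
      · rw [if_pos hae]; exact mem_closedNbhd_self G _
      · rw [if_neg hae]; exact hmem
    · rw [if_neg hb]
      by_cases hae : a = e ⟨i, Nat.lt_of_succ_lt h⟩
      · rw [if_pos hae]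
        have hb' : b ∈ closedNbhd G (e (jf ⟨i, Nat.lt_of_succ_lt h⟩ h)) := by
          apply hdom ⟨i, Nat.lt_of_succ_lt h⟩ h
          · obtain ⟨k, hk, hke⟩ := hay
            exact ⟨k, hk, hke⟩
          · rw [← hae]; exact closedNbhd_comm G ha
        exact closedNbhd_comm G hb'
      · rw [if_neg hae]; exact ha

lemma proj_step {V : Type*} (G : SimpleGraph V) (n : ℕ) (e : Fin n ≃ V)
    (jf : ∀ i : Fin n, (i : ℕ) + 1 < n → Fin n)
    (hlt : ∀ i h, i < jf i h)
    (hdom : ∀ (i : Fin n) (h : (i : ℕ) + 1 < n),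
      DominatesOn G {w | ∃ k : Fin n, i ≤ k ∧ e k = w} (e (jf i h)) (e i)) :
    ∀ i, i + 1 < n → ∀ r x, x ∈ closedNbhd G r →
      proj n e jf i x ∈ closedNbhd G (proj n e jf (i + 1) r) := by
  intro i h r x hxr
  have ha := proj_hom G n e jf hlt hdom i (by omega) x r hxr
  show proj n e jf i x ∈ closedNbhd G (Fstep n e jf i (proj n e jf i r))
  unfold Fstep
  simp only [dif_pos h]
  by_cases hb : proj n e jf i r = e ⟨i, Nat.lt_of_succ_lt h⟩
  · rw [if_pos hb]
    apply hdom ⟨i, Nat.lt_of_succ_lt h⟩ h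
    · obtain ⟨k, hk, hke⟩ := proj_mem n e jf hlt i (by omega) x
      exact ⟨k, hk, hke⟩
    · rw [← hb]; exact ha
  · rw [if_neg hb]; exact ha

lemma proj_last {V : Type*} (n : ℕ) (e : Fin n ≃ V)
    (jf : ∀ i : Fin n, (i : ℕ) + 1 < n → Fin n)
    (hlt : ∀ i h, i < jf i h) (hn : 0 < n) :
    ∀ r, proj n e jf (n - 1) r = e ⟨n - 1, by omega⟩ := by
  intro r
  obtain ⟨k, hk, hke⟩ := proj_mem n e jf hlt (n - 1) (by omega) r
  rw [← hke]
  congr 1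
  apply Fin.ext
  show (k : ℕ) = n - 1
  have := k.isLt
  omega

/-- Abstract form of the cop-win argument: if there is a family of "projections" `p i`
with `p 0 = id`, such that each robber step at level `i+1` can be tracked at level `i`,
and `p (n-1)` is constant (up to closed neighbourhoods) then the cop wins. -/
theorem copwin_aux {V : Type*} (G : SimpleGraph V) (n : ℕ) (hn : 0 < n)
    (p : ℕ → V → V) (hp0 : ∀ x, p 0 x = x)
    (hC : ∀ i, i + 1 < n → ∀ r x, x ∈ closedNbhd G r → p i x ∈ closedNbhd G (p (i + 1) r))
    (c0 : V) (hD : ∀ r, p (n - 1) r ∈ closedNbhd G c0) : CopWin G := by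
  classical
  have hmv : ∀ c r, (if h : ∃ j, p j r ∈ closedNbhd G c then p (Nat.find h) r else c) = c ∨
      G.Adj c (if h : ∃ j, p j r ∈ closedNbhd G c then p (Nat.find h) r else c) := by
    intro c r
    by_cases h : ∃ j, p j r ∈ closedNbhd G c
    · simp only [dif_pos h]
      rcases Set.mem_insert_iff.mp (Nat.find_spec h) with h' | h'
      · exact Or.inl h'
      · exact Or.inr h'
    · rw [dif_neg h]; exact Or.inl rfl
  set cs : CopStrategy G :=
    ⟨c0, fun c r => if h : ∃ j, p j r ∈ closedNbhd G c then p (Nat.find h) r else c, hmv⟩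
    with hcs
  refine ⟨cs, ?_⟩
  intro rs
  by_contra hcon
  push_neg at hcon
  have key : ∀ k, ∃ j, j + k + 1 ≤ n ∧
      p j (play G cs rs k).2 ∈ closedNbhd G (play G cs rs k).1 := by
    intro k
    induction k with
    | zero => exact ⟨n - 1, by omega, hD _⟩
    | succ k ih =>
      obtain ⟨j, hjn, hmem⟩ := ih
      have hex : ∃ j', p j' (play G cs rs k).2 ∈ closedNbhd G (play G cs rs k).1 := ⟨j, hmem⟩
      have hc1 : (play G cs rs (k + 1)).1 = p (Nat.find hex) (play G cs rs k).2 := by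
        show (if h : ∃ j', p j' (play G cs rs k).2 ∈ closedNbhd G (play G cs rs k).1 then
            p (Nat.find h) (play G cs rs k).2 else (play G cs rs k).1) = _
        rw [dif_pos hex]
      have hfl : Nat.find hex ≤ j := Nat.find_le hmem
      rcases Nat.eq_zero_or_pos (Nat.find hex) with h0 | hpos
      · exfalso
        apply hcon k
        rw [hc1, h0, hp0]
      · obtain ⟨i, hi⟩ : ∃ i, Nat.find hex = i + 1 := ⟨Nat.find hex - 1, by omega⟩
        have hr : (play G cs rs (k + 1)).2 ∈ closedNbhd G (play G cs rs k).2 := by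
          have hv := rs.valid (play G cs rs (k + 1)).1 (play G cs rs k).2
          have h2 : (play G cs rs (k + 1)).2
              = rs.move (play G cs rs (k + 1)).1 (play G cs rs k).2 := rfl
          rw [h2]
          rcases hv with h' | h'
          · rw [h']; exact mem_closedNbhd_self G _
          · exact Set.mem_insert_iff.mpr (Or.inr h')
        refine ⟨i, by omega, ?_⟩
        rw [hc1, hi]
        exact hC i (by omega) _ _ hr
  obtain ⟨j, hj, -⟩ := key n
  omega

/-- every finite dismantlable graph is cop-win. -/
theorem dismantlable_copWin {V : Type*} [Finite V] [Nonempty V] (G : SimpleGraph V)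
    (hG : G.Connected) (hd : Dismantlable G) : CopWin G := by
  classical
  obtain ⟨n, e, hdis⟩ := hd
  have hn : 0 < n := Fin.pos_iff_nonempty.mpr ⟨e.symm (Classical.arbitrary V)⟩
  choose jf hlt hdom using hdis
  exact copwin_aux G n hn (proj n e jf) (fun x => rfl)
    (proj_step G n e jf hlt hdom) (e ⟨n - 1, by omega⟩)
    (fun r => by rw [proj_last n e jf hlt hn r]; exact mem_closedNbhd_self G _)
end

section
/- If a finite graph G is cop-win, then G is dismantlable. -/
/-! ### Auxiliary development -/

section Aux

variable {V : Type*}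

lemma mem_closedNbhd {G : SimpleGraph V} {x y : V} :
    x ∈ closedNbhd G y ↔ x = y ∨ G.Adj y x := by
  simp [closedNbhd]

lemma self_mem_closedNbhd (G : SimpleGraph V) (v : V) : v ∈ closedNbhd G v :=
  Set.mem_insert _ _

lemma closedNbhd_symm {G : SimpleGraph V} {x y : V} :
    x ∈ closedNbhd G y ↔ y ∈ closedNbhd G x := by
  simp only [mem_closedNbhd]
  constructor
  · rintro (rfl | h); · exact Or.inl rfl
    · exact Or.inr h.symm
  · rintro (rfl | h); · exact Or.inl rfl
    · exact Or.inr h.symm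

/-- The cop wins from configuration `(c, r)` with the cop to move. -/
inductive CWin (G : SimpleGraph V) : V → V → Prop
  | capture (c r : V) (h : r ∈ closedNbhd G c) : CWin G c r
  | step (c r c' : V) (hc' : c' ∈ closedNbhd G c)
      (h : ∀ r' ∈ closedNbhd G r, CWin G c' r') : CWin G c r

lemma copMove_mem {G : SimpleGraph V} (cs : CopStrategy G) (c r : V) :
    cs.move c r ∈ closedNbhd G c := by
  rcases cs.valid c r with h | h
  · rw [h]; exact self_mem_closedNbhd G c
  · exact mem_closedNbhd.2 (Or.inr h)

/-- If the cop has a winning (memoryless) strategy, then from some initial cop vertex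
every robber position is a cop-winning configuration. -/
lemma copWin_cwin {G : SimpleGraph V} (hc : CopWin G) : ∃ c, ∀ r, CWin G c r := by
  by_contra h
  push_neg at h
  obtain ⟨cs, hcs⟩ := hc
  classical
  -- robber strategy maintaining non-winning configurations
  let rs : RobberStrategy G :=
    { init := fun c => Classical.choose (h c)
      move := fun c' r =>
        if hex : ∃ r', r' ∈ closedNbhd G r ∧ ¬ CWin G c' r' then
          Classical.choose hex
        else r
      valid := by
        intro c' r
        by_cases hex : ∃ r', r' ∈ closedNbhd G r ∧ ¬ CWin G c' r'
        · have := (Classical.choose_spec hex).1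
          rw [mem_closedNbhd] at this
          simpa [hex] using this
        · simp [hex] }
  have inv : ∀ k, ¬ CWin G (play G cs rs k).1 (play G cs rs k).2 := by
    intro k
    induction k with
    | zero => exact Classical.choose_spec (h cs.init)
    | succ k ih =>
      set c := (play G cs rs k).1 with hc1
      set r := (play G cs rs k).2 with hr1
      have hmove : cs.move c r ∈ closedNbhd G c := copMove_mem cs c r
      have hex : ∃ r', r' ∈ closedNbhd G r ∧ ¬ CWin G (cs.move c r) r' := by
        by_contra hex
        push_neg at hex
        exact ih (CWin.step c r (cs.move c r) hmove fun r' hr' => hex r' hr')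
      have hplay : play G cs rs (k+1) =
          (cs.move c r, rs.move (cs.move c r) r) := rfl
      rw [hplay]
      simp only [rs]
      rw [dif_pos hex]
      exact (Classical.choose_spec hex).2
  obtain ⟨k, hk⟩ := hcs rs
  apply inv k
  set c := (play G cs rs k).1
  set r := (play G cs rs k).2
  have hplay : (play G cs rs (k+1)).1 = cs.move c r := rfl
  rw [hplay] at hk
  exact CWin.capture c r (by rw [← hk]; exact copMove_mem cs c r)

/-- If the graph has no corner (no vertex dominated by a distinct vertex), then in any
cop-winning configuration the robber is already in the cop's closed neighbourhood. -/
lemma cwin_of_no_corner {G : SimpleGraph V}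
    (hnc : ∀ u v, u ≠ v → ¬ Dominates G u v) :
    ∀ c r, CWin G c r → r ∈ closedNbhd G c := by
  intro c r hw
  induction hw with
  | capture c r h => exact h
  | step c r c' hc' h ih =>
    by_cases hcr : c' = r
    · exact hcr ▸ hc'
    · exfalso
      exact hnc c' r hcr (fun w hw => ih w hw)

/-- A corner exists in a graph with at least 2 vertices where the cop can win. -/
lemma exists_corner [Fintype V] {G : SimpleGraph V}
    (hcard : 2 ≤ Fintype.card V) (hW : ∃ c, ∀ r, CWin G c r) :
    ∃ u v, u ≠ v ∧ Dominates G u v := by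
  by_contra hnc
  push_neg at hnc
  obtain ⟨c, hc⟩ := hW
  have hnc' : ∀ u v, u ≠ v → ¬ Dominates G u v := fun u v huv => hnc u v huv
  have hall : ∀ r, r ∈ closedNbhd G c := fun r => cwin_of_no_corner hnc' c r (hc r)
  obtain ⟨r, hr⟩ := Fintype.exists_ne_of_one_lt_card (by omega) c
  exact hnc c r (fun h => hr h.symm) (fun w _ => hall w)

section Transfer

open Classical in
/-- The retraction sending `v` to its dominator `u`. -/
noncomputable def retr {v u : V} (huv : u ≠ v) (x : V) : {x : V // x ≠ v} :=
  if h : x = v then ⟨u, huv⟩ else ⟨x, h⟩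

lemma retr_val_of_ne {v u : V} (huv : u ≠ v) {x : V} (hx : x ≠ v) :
    ((retr huv x : {x : V // x ≠ v}) : V) = x := by
  simp [retr, hx]

lemma retr_hom {G : SimpleGraph V} {v u : V} (huv : u ≠ v) (hdom : Dominates G u v) :
    ∀ x y : V, x ∈ closedNbhd G y →
      ((retr huv x : {x : V // x ≠ v}) : V) ∈ closedNbhd G ((retr huv y : {x : V // x ≠ v}) : V) := by
  intro x y hxy
  by_cases hy : y = v
  · have hxu : x ∈ closedNbhd G u := hdom (hy ▸ hxy)
    have hyval : ((retr huv y : {x : V // x ≠ v}) : V) = u := by simp [retr, hy]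
    rw [hyval]
    by_cases hx : x = v
    · have hxval : ((retr huv x : {x : V // x ≠ v}) : V) = u := by simp [retr, hx]
      rw [hxval]; exact self_mem_closedNbhd G u
    · rw [retr_val_of_ne huv hx]; exact hxu
  · rw [retr_val_of_ne huv hy]
    by_cases hx : x = v
    · have hxval : ((retr huv x : {x : V // x ≠ v}) : V) = u := by simp [retr, hx]
      rw [hxval]
      have h1 : y ∈ closedNbhd G v := closedNbhd_symm.mp (hx ▸ hxy)
      exact closedNbhd_symm.mp (hdom h1)
    · rw [retr_val_of_ne huv hx]; exact hxy

lemma closedNbhd_comap {G : SimpleGraph V} {v : V} {b w : {x : V // x ≠ v}} :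
    w ∈ closedNbhd (G.comap (Subtype.val : {x : V // x ≠ v} → V)) b ↔
      (w : V) ∈ closedNbhd G (b : V) := by
  simp [mem_closedNbhd, SimpleGraph.comap, Subtype.ext_iff]

lemma cwin_transfer {G : SimpleGraph V} {v u : V} (huv : u ≠ v)
    (hdom : Dominates G u v) {c r : V} (hw : CWin G c r) :
    ∀ r' : {x : V // x ≠ v}, (r' : V) = r →
      CWin (G.comap (Subtype.val : {x : V // x ≠ v} → V)) (retr huv c) r' := by
  induction hw with
  | capture c r h =>
    intro r' hr'
    refine CWin.capture _ _ (closedNbhd_comap.2 ?_)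
    have hrne : r ≠ v := by rw [← hr']; exact r'.2
    have h2 := retr_hom huv hdom r c h
    rw [retr_val_of_ne huv hrne] at h2
    rw [hr']
    exact h2
  | step c r c' hc' h ih =>
    intro r' hr'
    refine CWin.step _ _ (retr huv c') (closedNbhd_comap.2 (retr_hom huv hdom c' c hc')) ?_
    intro r'' hr''
    have hmem : (r'' : V) ∈ closedNbhd G r := hr' ▸ closedNbhd_comap.1 hr''
    exact ih (r'' : V) hmem r'' rfl

end Transfer

lemma dismantlable_of_small [Fintype V] (G : SimpleGraph V)
    (h : Fintype.card V ≤ 1) : Dismantlable G := by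
  refine ⟨Fintype.card V, (Fintype.equivFin V).symm, ?_⟩
  intro i hi
  omega

lemma cwin_dismantlable : ∀ (n : ℕ) (V : Type u) (_ : Fintype V) (G : SimpleGraph V),
    Fintype.card V = n → (∃ c, ∀ r, CWin G c r) → Dismantlable G := by
  intro n
  induction n with
  | zero =>
    intro V _ G hcard _
    exact dismantlable_of_small G (by omega)
  | succ m ih =>
    intro V _ G hcard hW
    by_cases hsmall : Fintype.card V ≤ 1
    · exact dismantlable_of_small G hsmall
    · obtain ⟨u, v, huv, hdom⟩ := exists_corner (by omega) hW
      classical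
      set V' := {x : V // x ≠ v} with hV'
      set G' : SimpleGraph V' := G.comap Subtype.val with hG'
      have hcard' : Fintype.card V' = m := by
        have h1 : Fintype.card V = Fintype.card V' + 1 := by
          rw [← Fintype.card_option]
          exact Fintype.card_congr (Equiv.optionSubtypeNe v).symm
        omega
      have hW' : ∃ c', ∀ r', CWin G' c' r' := by
        obtain ⟨c, hc⟩ := hW
        exact ⟨retr huv c, fun r' => cwin_transfer huv hdom (hc (r' : V)) r' rfl⟩
      obtain ⟨n', e', he'⟩ := ih V' (inferInstance) G' hcard' hW'
      -- build the equivalence Fin (n'+1) ≃ V with 0 ↦ v and (i+1) ↦ e' i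
      let e : Fin (n' + 1) ≃ V :=
        (finSuccEquiv n').trans ((e'.optionCongr).trans (Equiv.optionSubtypeNe v))
      have he0 : e 0 = v := by
        show Equiv.optionSubtypeNe v (Equiv.optionCongr e' (finSuccEquiv n' 0)) = v
        rw [finSuccEquiv_zero]
        rfl
      have heS : ∀ i : Fin n', e i.succ = (e' i : V) := by
        intro i
        show Equiv.optionSubtypeNe v (Equiv.optionCongr e' (finSuccEquiv n' i.succ)) = _
        rw [finSuccEquiv_succ]
        rfl
      refine ⟨n' + 1, e, ?_⟩
      intro i hi
      rcases Fin.eq_zero_or_eq_succ i with rfl | ⟨i₀, rfl⟩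
      · -- i = 0 : use the dominator u
        have hu' : u ≠ v := huv
        refine ⟨e.symm u, ?_, ?_⟩
        · have : e.symm u ≠ 0 := by
            intro h0
            apply huv
            have := congrArg e h0
            rwa [Equiv.apply_symm_apply, he0] at this
          exact Fin.pos_of_ne_zero this
        · intro w _ hw
          rw [he0] at hw
          rw [Equiv.apply_symm_apply]
          exact hdom hw
      · -- i = i₀.succ : use the property of e'
        have hi₀ : (i₀ : ℕ) + 1 < n' := by
          have hv : (i₀.succ : ℕ) = (i₀ : ℕ) + 1 := Fin.val_succ i₀
          omega
        obtain ⟨j₀, hj₀lt, hj₀dom⟩ := he' i₀ hi₀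
        refine ⟨j₀.succ, ?_, ?_⟩
        · rw [Fin.lt_def, Fin.val_succ, Fin.val_succ]
          exact Nat.add_lt_add_right hj₀lt 1
        intro w hwS hw
        obtain ⟨k, hik, hkw⟩ := hwS
        rcases Fin.eq_zero_or_eq_succ k with rfl | ⟨k₀, rfl⟩
        · exfalso
          have : (i₀.succ : Fin (n'+1)) ≤ 0 := hik
          simp [Fin.le_def] at this
        · have hik₀ : i₀ ≤ k₀ := by
            have := hik
            simp only [Fin.le_def, Fin.val_succ] at this ⊢
            omega
          rw [heS] at hkw
          have hwne : w ≠ v := hkw ▸ (e' k₀).2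
          have hwS' : (⟨w, hwne⟩ : V') ∈ {w' : V' | ∃ k' : Fin n', i₀ ≤ k' ∧ e' k' = w'} :=
            ⟨k₀, hik₀, Subtype.ext hkw⟩
          rw [heS] at hw ⊢
          have hw' : (⟨w, hwne⟩ : V') ∈ closedNbhd G' (e' i₀) := closedNbhd_comap.2 hw
          have := hj₀dom _ hwS' hw'
          exact closedNbhd_comap.1 this

end Aux

/-- every finite cop-win graph is dismantlable. -/
theorem copWin_dismantlable {V : Type*} [Finite V] (G : SimpleGraph V)
    (hG : G.Connected) (hc : CopWin G) : Dismantlable G := by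
  have : Fintype V := Fintype.ofFinite V
  exact cwin_dismantlable (Fintype.card V) V this G rfl (copWin_cwin hc)
end

section
/- Retracts of cop-win graphs are cop-win: if G is a finite cop-win (dismantlable) graph and H is a retract of G (there is a graph homomorphism r: G → H with H an induced subgraph of G and r restricted to H the identity), then H is cop-win. -/
/-- The cop, to move at `c` with the robber at `ρ`, catches the robber within `n` moves. -/
def CopWinsWithin {V : Type*} (G : SimpleGraph V) : ℕ → V → V → Prop
  | 0, _, _ => False
  | n + 1, c, ρ => ∃ c' ∈ closedNbhd G c,
      c' = ρ ∨ ∀ ρ' ∈ closedNbhd G ρ, CopWinsWithin G n c' ρ'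

section CopWinsWithin

variable {V : Type*} {G : SimpleGraph V}

theorem CopWinsWithin.mono {m n : ℕ} (hmn : m ≤ n) {c ρ : V} (h : CopWinsWithin G m c ρ) :
    CopWinsWithin G n c ρ := by
  induction m generalizing n c ρ with
  | zero => exact h.elim
  | succ m ih =>
    obtain ⟨n, rfl⟩ := Nat.exists_eq_add_of_le' (Nat.one_le_of_lt hmn)
    obtain ⟨c', hc', hwin⟩ := h
    exact ⟨c', hc', hwin.imp_right fun h ρ' hρ' => ih (by omega) (h ρ' hρ')⟩

theorem exists_escape [Finite V] {c ρ : V} (hlose : ∀ n, ¬ CopWinsWithin G n c ρ)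
    {c' : V} (hc' : c' ∈ closedNbhd G c) :
    c' ≠ ρ ∧ ∃ ρ' ∈ closedNbhd G ρ, ∀ n, ¬ CopWinsWithin G n c' ρ' := by
  refine ⟨fun hcap => hlose 1 ⟨c', hc', .inl hcap⟩, ?_⟩
  by_contra! hwin
  have hbound : ∀ᶠ n in Filter.atTop, ∀ ρ', ρ' ∈ closedNbhd G ρ → CopWinsWithin G n c' ρ' :=
    Filter.eventually_all.2 fun ρ' => Filter.eventually_atTop.2 <| by
      by_cases hρ' : ρ' ∈ closedNbhd G ρ
      · obtain ⟨n, hn⟩ := hwin ρ' hρ'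
        exact ⟨n, fun m hm _ => hn.mono hm⟩
      · exact ⟨0, fun _ _ h => absurd h hρ'⟩
  obtain ⟨n, hn⟩ := hbound.exists
  exact hlose (n + 1) ⟨c', hc', .inr hn⟩

open Classical in
noncomputable def escapeMove (G : SimpleGraph V) (c ρ : V) : V :=
  if h : ∃ ρ' ∈ closedNbhd G ρ, ∀ n, ¬ CopWinsWithin G n c ρ' then h.choose else ρ

theorem escapeMove_mem (c ρ : V) : escapeMove G c ρ ∈ closedNbhd G ρ := by
  unfold escapeMove
  split_ifs with h
  · exact h.choose_spec.1
  · exact Set.mem_insert ρ _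

theorem escapeMove_escapes [Finite V] {c ρ : V} (hlose : ∀ n, ¬ CopWinsWithin G n c ρ)
    {c' : V} (hc' : c' ∈ closedNbhd G c) :
    c' ≠ ρ ∧ ∀ n, ¬ CopWinsWithin G n c' (escapeMove G c' ρ) := by
  obtain ⟨hne, hesc⟩ := exists_escape hlose hc'
  refine ⟨hne, ?_⟩
  rw [escapeMove, dif_pos hesc]
  exact hesc.choose_spec.2

theorem exists_copWinsWithin_of_winning [Finite V] (cs : CopStrategy G)
    (hwin : ∀ rs : RobberStrategy G, ∃ k, (play G cs rs (k + 1)).1 = (play G cs rs k).2)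
    (ρ₀ : V) : ∃ n, CopWinsWithin G n cs.init ρ₀ := by
  by_contra! hlose
  let rs : RobberStrategy G := ⟨fun _ => ρ₀, escapeMove G, escapeMove_mem⟩
  have hlosing : ∀ k n, ¬ CopWinsWithin G n (play G cs rs k).1 (play G cs rs k).2 := by
    intro k
    induction k with
    | zero => exact hlose
    | succ k ih => exact (escapeMove_escapes ih (cs.valid _ _)).2
  obtain ⟨k, hcap⟩ := hwin rs
  exact (escapeMove_escapes (hlosing k) (cs.valid _ _)).1 hcap

open Classical in
/-- Moving as in the least bound makes the cop's strategy positional yet bound-decreasing. -/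
noncomputable def rankMove (G : SimpleGraph V) (c ρ : V) : V :=
  if h : ∃ n, CopWinsWithin G (n + 1) c ρ then (Nat.find_spec h).choose else c

open Classical in
theorem rankMove_mem (c ρ : V) : rankMove G c ρ ∈ closedNbhd G c := by
  unfold rankMove
  split_ifs with h
  · exact (Nat.find_spec h).choose_spec.1
  · exact Set.mem_insert c _

open Classical in
theorem rankMove_spec {n : ℕ} {c ρ : V} (h : CopWinsWithin G (n + 1) c ρ) :
    rankMove G c ρ = ρ ∨ ∀ ρ' ∈ closedNbhd G ρ, CopWinsWithin G n (rankMove G c ρ) ρ' := by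
  have hex : ∃ m, CopWinsWithin G (m + 1) c ρ := ⟨n, h⟩
  rw [rankMove, dif_pos hex]
  exact (Nat.find_spec hex).choose_spec.2.imp_right fun hwin ρ' hρ' =>
    (hwin ρ' hρ').mono (Nat.find_min' hex h)

theorem copWin_of_forall_copWinsWithin (c₀ : V) (h : ∀ ρ, ∃ n, CopWinsWithin G n c₀ ρ) :
    CopWin G := by
  let cs : CopStrategy G := ⟨c₀, rankMove G, rankMove_mem⟩
  refine ⟨cs, fun rs => ?_⟩
  obtain ⟨n, hn⟩ := h (rs.init c₀)
  suffices ∀ n k, CopWinsWithin G n (play G cs rs k).1 (play G cs rs k).2 →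
      ∃ j, (play G cs rs (j + 1)).1 = (play G cs rs j).2 from this n 0 hn
  intro n
  induction n with
  | zero => exact fun _ h => h.elim
  | succ n ih =>
    intro k hk
    rcases rankMove_spec hk with hcap | hnext
    · exact ⟨k, hcap⟩
    · exact ih (k + 1) (hnext _ (rs.valid _ _))

theorem CopWinsWithin.of_retraction {W : Type*} {H : SimpleGraph W} (f : V → W) (g : W → V)
    (hf : ∀ a b, b ∈ closedNbhd G a → f b ∈ closedNbhd H (f a))
    (hg : ∀ a b, b ∈ closedNbhd H a → g b ∈ closedNbhd G (g a))
    (hfg : ∀ w, f (g w) = w) {n : ℕ} {c : V} {σ : W} (h : CopWinsWithin G n c (g σ)) :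
    CopWinsWithin H n (f c) σ := by
  induction n generalizing c σ with
  | zero => exact h.elim
  | succ n ih =>
    obtain ⟨c', hc', hwin⟩ := h
    refine ⟨f c', hf c c' hc', hwin.imp (fun hcap => by rw [hcap, hfg]) fun hnext σ' hσ' => ?_⟩
    exact ih (hnext (g σ') (hg σ σ' hσ'))

end CopWinsWithin

theorem retract_copWin_general {V : Type*} [Finite V] (G : SimpleGraph V)
    (S : Set V) (r : V → S)
    (hhom : ∀ a b : V, G.Adj a b → r a = r b ∨ (G.induce S).Adj (r a) (r b))
    (hfix : ∀ s : S, r (s : V) = s)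
    (hc : CopWin G) : CopWin (G.induce S) := by
  have hr : ∀ a b, b ∈ closedNbhd G a → r b ∈ closedNbhd (G.induce S) (r a) := by
    rintro a b (rfl | hab)
    · exact Set.mem_insert _ _
    · exact (hhom a b hab).imp Eq.symm id
  have hval : ∀ a b : S, b ∈ closedNbhd (G.induce S) a → (b : V) ∈ closedNbhd G a := by
    rintro a b (rfl | hab)
    · exact Set.mem_insert _ _
    · exact Or.inr hab
  obtain ⟨cs, hwin⟩ := hc
  refine copWin_of_forall_copWinsWithin (r cs.init) fun σ => ?_
  obtain ⟨n, hn⟩ := exists_copWinsWithin_of_winning cs hwin σ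
  exact ⟨n, hn.of_retraction r Subtype.val hr hval hfix⟩

/-- retracts of cop-win graphs are cop-win. `S` induces the subgraph `H`,
and `r` is a retraction of `G` onto `H` (a homomorphism in the reflexive sense, fixing
`S` pointwise). -/
theorem retract_copWin {V : Type*} [Finite V] [Nonempty V] (G : SimpleGraph V)
    (S : Set V) (r : V → S)
    (hhom : ∀ a b : V, G.Adj a b → r a = r b ∨ (G.induce S).Adj (r a) (r b))
    (hfix : ∀ s : S, r (s : V) = s)
    (hc : CopWin G) : CopWin (G.induce S) :=
  retract_copWin_general G S r hhom hfix hc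
end
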